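/- In the figure-eight knot group Γ = ⟨x, y | x y⁻¹ x⁻¹ y x y⁻¹ x y x⁻¹ y⁻¹⟩, the assignment φ(x) = x⁻¹, φ(y) = y x⁻¹ y⁻¹ x y⁻¹ extends to a group endomorphism of Γ (the relator is mapped to a trivial element), and φ fixes the longitude l = y x⁻¹ y⁻¹ x² y⁻¹ x⁻¹ y, i.e. φ(l) = l in Γ, while φ(m) = m⁻¹ for the meridian m = x. -/

import Mathlib

open Matrix

/-- The relator of the figure-eight knot group: x y⁻¹ x⁻¹ y x y⁻¹ x y x⁻¹ y⁻¹. -/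
def figEightRels : Set (FreeGroup (Fin 2)) :=
  { FreeGroup.of 0 * (FreeGroup.of 1)⁻¹ * (FreeGroup.of 0)⁻¹ * FreeGroup.of 1 *
    FreeGroup.of 0 * (FreeGroup.of 1)⁻¹ * FreeGroup.of 0 * FreeGroup.of 1 *
    (FreeGroup.of 0)⁻¹ * (FreeGroup.of 1)⁻¹ }

/-- The figure-eight knot group. -/
def FigEightGroup := PresentedGroup figEightRels

instance : Group FigEightGroup := by unfold FigEightGroup; infer_instance

def fig8x : FigEightGroup := PresentedGroup.of 0
def fig8y : FigEightGroup := PresentedGroup.of 1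

/-- The meridian m = x. -/
def fig8m : FigEightGroup := fig8x

/-- The longitude l = y x⁻¹ y⁻¹ x² y⁻¹ x⁻¹ y. -/
def fig8l : FigEightGroup :=
  fig8y * fig8x⁻¹ * fig8y⁻¹ * fig8x * fig8x * fig8y⁻¹ * fig8x⁻¹ * fig8y

/-!
The images of the relator r and of the longitude l under x ↦ x⁻¹, y ↦ y x⁻¹ y⁻¹ x y⁻¹ are,
in the free group, products of conjugates of r^{±1} (times l, for the longitude), so they
reduce to 1 and to l in any group where r = 1.
-/

namespace FigEight

variable {G H : Type*} [Group G] [Group H]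

def relator (x y : G) : G := x * y⁻¹ * x⁻¹ * y * x * y⁻¹ * x * y * x⁻¹ * y⁻¹

def longitude (x y : G) : G := y * x⁻¹ * y⁻¹ * x * x * y⁻¹ * x⁻¹ * y

def amphicheiralY (x y : G) : G := y * x⁻¹ * y⁻¹ * x * y⁻¹

theorem map_relator (f : G →* H) (x y : G) : f (relator x y) = relator (f x) (f y) := by
  simp only [relator, map_mul, map_inv]

theorem map_longitude (f : G →* H) (x y : G) : f (longitude x y) = longitude (f x) (f y) := by
  simp only [longitude, map_mul, map_inv]

theorem relator_amphicheiral_eq_one {x y : G} (h : relator x y = 1) :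
    relator x⁻¹ (amphicheiralY x y) = 1 := by
  have conj : relator x⁻¹ (amphicheiralY x y) =
      (x⁻¹ * y * y * x⁻¹) * relator x y * (x⁻¹ * y * y * x⁻¹)⁻¹ *
        ((x⁻¹ * y * x⁻¹ * y * x⁻¹) * (relator x y)⁻¹ * (x⁻¹ * y * x⁻¹ * y * x⁻¹)⁻¹) *
        ((y * x⁻¹ * y⁻¹) * (relator x y)⁻¹ * (y * x⁻¹ * y⁻¹)⁻¹) := by
    simp only [relator, amphicheiralY]; group
  rw [conj, h]; group

theorem longitude_amphicheiral {x y : G} (h : relator x y = 1) :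
    longitude x⁻¹ (amphicheiralY x y) = longitude x y := by
  have conj : longitude x⁻¹ (amphicheiralY x y) =
      (y * x⁻¹ * y⁻¹ * x * x * y⁻¹ * x * y * x⁻¹ * y⁻¹) * (relator x y)⁻¹ *
          (y * x⁻¹ * y⁻¹ * x * x * y⁻¹ * x * y * x⁻¹ * y⁻¹)⁻¹ *
        ((y * x⁻¹ * y⁻¹ * x * x * y⁻¹ * x⁻¹ * y * y * x⁻¹) * relator x y *
          (y * x⁻¹ * y⁻¹ * x * x * y⁻¹ * x⁻¹ * y * y * x⁻¹)⁻¹) *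
        longitude x y := by
    simp only [relator, longitude, amphicheiralY]; group
  rw [conj, h]; group

theorem relator_generators_eq_one : relator fig8x fig8y = 1 :=
  PresentedGroup.one_of_mem (Set.mem_singleton _)

def amphicheiralEndo : FigEightGroup →* FigEightGroup :=
  PresentedGroup.toGroup (f := ![fig8x⁻¹, amphicheiralY fig8x fig8y]) <| by
    rintro r rfl
    exact (map_relator _ _ _).trans (relator_amphicheiral_eq_one relator_generators_eq_one)

theorem amphicheiralEndo_x : amphicheiralEndo fig8x = fig8x⁻¹ := PresentedGroup.toGroup.of _

theorem amphicheiralEndo_y : amphicheiralEndo fig8y = amphicheiralY fig8x fig8y :=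
  PresentedGroup.toGroup.of _

end FigEight

/-- The assignment x ↦ x⁻¹, y ↦ y x⁻¹ y⁻¹ x y⁻¹ extends to an endomorphism φ of the
figure-eight knot group, which fixes the longitude and inverts the meridian. -/
theorem fig8_amphicheiral_endomorphism :
    ∃ φ : FigEightGroup →* FigEightGroup,
      φ fig8x = fig8x⁻¹ ∧
      φ fig8y = fig8y * fig8x⁻¹ * fig8y⁻¹ * fig8x * fig8y⁻¹ ∧
      φ fig8l = fig8l ∧ φ fig8m = fig8m⁻¹ := by
  refine ⟨FigEight.amphicheiralEndo, FigEight.amphicheiralEndo_x, FigEight.amphicheiralEndo_y,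
    ?_, FigEight.amphicheiralEndo_x⟩
  change FigEight.amphicheiralEndo (FigEight.longitude fig8x fig8y) =
    FigEight.longitude fig8x fig8y
  rw [FigEight.map_longitude, FigEight.amphicheiralEndo_x, FigEight.amphicheiralEndo_y,
    FigEight.longitude_amphicheiral FigEight.relator_generators_eq_one]
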